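/- arXiv:1806.05756 — 2 statements merged into one kernel-verified Lean document; each statement's English description precedes it below -/
import Mathlib

section
/- Let P_θ and P_{θ0} be one-dimensional logistic regression distributions on (x,y) ∈ {−1,1}² with x uniform and P_θ(y|x) = 1/(1 + e^{−yθx}). Then the total variation distance is ||P_θ − P_{θ0}||_TV = |e^θ − e^{θ0}| / (1 + e^θ + e^{θ0} + e^{θ+θ0}), and for θ = θ0 + Δ with θ0 > 0, ||P_θ − P_{θ0}||_TV ≤ e^{−θ0}|1 − e^{−Δ}|. -/
/-! Each of the four points carries mass `σ(±θ)/2` for the logistic function `σ`, and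
`σ(-θ) = 1 - σ(θ)`, so the total variation distance is `|σ(θ) - σ(θ₀)|`. Writing
`σ(t) = eᵗ / (1 + eᵗ)` gives the closed form. Since `u ↦ 1 / (1 + u)` is `1`-Lipschitz on
`u ≥ 0`, applying it at `u = e^{-t}` gives `|σ(θ) - σ(θ₀)| ≤ |e^{-θ} - e^{-θ₀}|`, which is
`e^{-θ₀} |1 - e^{-Δ}|` at `θ = θ₀ + Δ`. -/

def sgn (b : Bool) : ℝ := if b then 1 else -1

noncomputable def pLogistic (θ : ℝ) (xy : Bool × Bool) : ℝ :=
  (1 / 2) * (1 / (1 + Real.exp (-(sgn xy.2) * θ * sgn xy.1)))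

noncomputable def tvFin (p q : Bool × Bool → ℝ) : ℝ :=
  (1 / 2) * ∑ z : Bool × Bool, |p z - q z|

open Real

lemma pLogistic_apply (θ : ℝ) (x y : Bool) :
    pLogistic θ (x, y) = 2⁻¹ * sigmoid (sgn y * θ * sgn x) := by
  simp only [pLogistic, sigmoid_def, neg_mul, one_div]

lemma tvFin_pLogistic (θ θ₀ : ℝ) :
    tvFin (pLogistic θ) (pLogistic θ₀) = |sigmoid θ - sigmoid θ₀| := by
  have h_neg : sigmoid (-θ) - sigmoid (-θ₀) = -(sigmoid θ - sigmoid θ₀) := by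
    rw [sigmoid_neg, sigmoid_neg]; ring
  simp only [tvFin, Fintype.sum_prod_type, Fintype.sum_bool, pLogistic_apply, sgn, if_true,
    Bool.false_eq_true, if_false, one_mul, mul_one, neg_mul, mul_neg, neg_neg, ← mul_sub,
    abs_mul, h_neg, abs_neg, abs_of_pos (inv_pos.mpr (two_pos : (0 : ℝ) < 2))]
  ring

lemma sigmoid_eq_exp_div (t : ℝ) : sigmoid t = exp t / (1 + exp t) := by
  rw [sigmoid_def, exp_neg]
  field_simp
  ring

lemma abs_sigmoid_sub_sigmoid (a b : ℝ) :
    |sigmoid a - sigmoid b| = |exp a - exp b| / (1 + exp a + exp b + exp (a + b)) := by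
  have h_denom : 1 + exp a + exp b + exp (a + b) = (1 + exp a) * (1 + exp b) := by
    rw [exp_add]; ring
  have h_diff : sigmoid a - sigmoid b = (exp a - exp b) / ((1 + exp a) * (1 + exp b)) := by
    rw [sigmoid_eq_exp_div, sigmoid_eq_exp_div]
    field_simp
    ring
  have h_pos : 0 < (1 + exp a) * (1 + exp b) := by positivity
  rw [h_denom, h_diff, abs_div, abs_of_pos h_pos]

lemma abs_inv_one_add_sub_inv_one_add_le {u v : ℝ} (hu : 0 ≤ u) (hv : 0 ≤ v) :
    |(1 + u)⁻¹ - (1 + v)⁻¹| ≤ |u - v| := by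
  have h_prod : 1 ≤ (1 + u) * (1 + v) := by nlinarith
  have h_pos : 0 < (1 + u) * (1 + v) := by positivity
  rw [inv_sub_inv (by positivity) (by positivity), abs_div, abs_of_pos h_pos,
    add_sub_add_left_eq_sub, abs_sub_comm]
  exact div_le_self (abs_nonneg _) h_prod

lemma abs_sigmoid_sub_sigmoid_le (a b : ℝ) :
    |sigmoid a - sigmoid b| ≤ |exp (-a) - exp (-b)| :=
  abs_inv_one_add_sub_inv_one_add_le (exp_pos _).le (exp_pos _).le

theorem statement10_general (θ0 Δ : ℝ) :
    (∀ θ : ℝ, tvFin (pLogistic θ) (pLogistic θ0) =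
        |Real.exp θ - Real.exp θ0| /
          (1 + Real.exp θ + Real.exp θ0 + Real.exp (θ + θ0))) ∧
      tvFin (pLogistic (θ0 + Δ)) (pLogistic θ0) ≤
        Real.exp (-θ0) * |1 - Real.exp (-Δ)| := by
  refine ⟨fun θ => by rw [tvFin_pLogistic, abs_sigmoid_sub_sigmoid], ?_⟩
  have h_exp : exp (-(θ0 + Δ)) - exp (-θ0) = -(exp (-θ0) * (1 - exp (-Δ))) := by
    rw [neg_add, exp_add]; ring
  calc tvFin (pLogistic (θ0 + Δ)) (pLogistic θ0)
      ≤ |exp (-(θ0 + Δ)) - exp (-θ0)| := by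
        rw [tvFin_pLogistic]; exact abs_sigmoid_sub_sigmoid_le _ _
    _ = exp (-θ0) * |1 - exp (-Δ)| := by
        rw [h_exp, abs_neg, abs_mul, abs_of_pos (exp_pos _)]

/-- The total variation distance between one-dimensional logistic regression distributions:
`‖P_θ - P_{θ₀}‖_TV = |e^θ - e^{θ₀}| / (1 + e^θ + e^{θ₀} + e^{θ+θ₀})`, and for
`θ = θ₀ + Δ` with `θ₀ > 0`, `‖P_θ - P_{θ₀}‖_TV ≤ e^{-θ₀} |1 - e^{-Δ}|`. -/
theorem statement10 (θ0 Δ : ℝ) (hθ0 : 0 < θ0) :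
    (∀ θ : ℝ, tvFin (pLogistic θ) (pLogistic θ0) =
        |Real.exp θ - Real.exp θ0| /
          (1 + Real.exp θ + Real.exp θ0 + Real.exp (θ + θ0))) ∧
      tvFin (pLogistic (θ0 + Δ)) (pLogistic θ0) ≤
        Real.exp (-θ0) * |1 - Real.exp (-Δ)| :=
  statement10_general θ0 Δ
end

section
/- Let {P_θ} be a one-parameter exponential family with density p_θ(x) = exp(θT(x) − A(θ)) with respect to a base measure μ. Then the L¹-information J_θ := E_θ[|T(X) − A'(θ)|] satisfies: the total variation distance obeys 2||P_{θ+h} − P_θ||_TV = |h|·J_θ + o(|h|) as h → 0, where A'(θ) = E_θ[T(X)]. -/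
open MeasureTheory Asymptotics

/-- Total variation distance between two measures: `sup_A |P(A) - Q(A)|`. -/
noncomputable def tvDist {X : Type*} [MeasurableSpace X] (P Q : Measure X) : ℝ :=
  ⨆ s : {s : Set X // MeasurableSet s}, |(P s.1).toReal - (Q s.1).toReal|

/-- Log-partition function `A(θ) = log ∫ e^{θ T(x)} dμ(x)` of a one-parameter
exponential family. -/
noncomputable def logPart {X : Type*} [MeasurableSpace X]
    (μ : Measure X) (T : X → ℝ) (θ : ℝ) : ℝ :=
  Real.log (∫ x, Real.exp (θ * T x) ∂μ)

/-- The exponential family measure `P_θ` with density `exp(θ T(x) - A(θ))` w.r.t. `μ`. -/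
noncomputable def expFam {X : Type*} [MeasurableSpace X]
    (μ : Measure X) (T : X → ℝ) (θ : ℝ) : Measure X :=
  μ.withDensity fun x => ENNReal.ofReal (Real.exp (θ * T x - logPart μ T θ))

open Filter Set Metric Topology ProbabilityTheory Real

/-! The densities `p_θ = exp (θ T - A θ)` are differentiable in `θ` with derivative
`p_θ (T - A' θ)`. Since `A` and `A'` are continuous (indeed analytic) at `θ₀`, these derivatives
are dominated, for `θ` near `θ₀`, by the integrable envelope `C (|T| + C) exp (θ₀ T + δ |T|)`.
The mean value theorem and dominated convergence then give
`|h|⁻¹ ∫ |p_{θ₀+h} - p_{θ₀}| dμ → ∫ |p_{θ₀} (T - A' θ₀)| dμ = J_{θ₀}`, and Scheffé's identity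
`2 ‖P - Q‖_TV = ∫ |p - q| dμ` (the supremum over sets is attained at `{q ≤ p}`) identifies the
left-hand side with the total variation distance. -/

section

variable {X : Type*} [MeasurableSpace X] {μ : Measure X}

theorem tendsto_integral_abs_slope_of_hasDerivAt {f f' : ℝ → X → ℝ} {g : X → ℝ} {θ₀ r : ℝ}
    (hr : 0 < r) (hf : ∀ᶠ θ in 𝓝 θ₀, AEStronglyMeasurable (f θ) μ) (hg : Integrable g μ)
    (h_bound : ∀ᵐ x ∂μ, ∀ θ ∈ ball θ₀ r, |f' θ x| ≤ g x)
    (h_diff : ∀ᵐ x ∂μ, ∀ θ ∈ ball θ₀ r, HasDerivAt (f · x) (f' θ x) θ) :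
    Tendsto (fun h => ∫ x, |(f (θ₀ + h) x - f θ₀ x) / h| ∂μ) (𝓝[≠] 0)
      (𝓝 (∫ x, |f' θ₀ x| ∂μ)) := by
  have h_lip : ∀ h ∈ ball (0 : ℝ) r, ∀ᵐ x ∂μ, |f (θ₀ + h) x - f θ₀ x| ≤ g x * |h| := by
    intro h hh
    filter_upwards [h_bound, h_diff] with x hbx hdx
    have hmem : θ₀ + h ∈ ball θ₀ r := by simpa [dist_eq_norm] using hh
    simpa using (convex_ball θ₀ r).norm_image_sub_le_of_norm_hasDerivWithin_le
      (fun θ hθ => (hdx θ hθ).hasDerivWithinAt) hbx (mem_ball_self hr) hmem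
  have h_slope : ∀ᵐ x ∂μ, Tendsto (fun h => |(f (θ₀ + h) x - f θ₀ x) / h|) (𝓝[≠] 0)
      (𝓝 |f' θ₀ x|) := by
    filter_upwards [h_diff] with x hdx
    simpa [div_eq_inv_mul] using (hdx θ₀ (mem_ball_self hr)).tendsto_slope_zero.abs
  have h_shift : Tendsto (fun h : ℝ => θ₀ + h) (𝓝[≠] (0 : ℝ)) (𝓝 θ₀) := by
    simpa using ((continuous_const_add θ₀).tendsto 0).mono_left nhdsWithin_le_nhds
  refine tendsto_integral_filter_of_dominated_convergence g ?_ ?_ hg h_slope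
  · filter_upwards [h_shift.eventually hf] with h hfh
    have hf₀ := hf.self_of_nhds
    fun_prop
  · filter_upwards [nhdsWithin_le_nhds (ball_mem_nhds 0 hr), self_mem_nhdsWithin] with h hh hne
    filter_upwards [h_lip h hh] with x hx
    rw [Real.norm_eq_abs, abs_abs, abs_div, div_le_iff₀ (abs_pos.2 hne)]
    exact hx

theorem isLittleO_integral_abs_sub_sub_abs_mul_integral_abs_deriv {f f' : ℝ → X → ℝ}
    {g : X → ℝ} {θ₀ r : ℝ} (hr : 0 < r) (hf : ∀ᶠ θ in 𝓝 θ₀, AEStronglyMeasurable (f θ) μ)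
    (hg : Integrable g μ) (h_bound : ∀ᵐ x ∂μ, ∀ θ ∈ ball θ₀ r, |f' θ x| ≤ g x)
    (h_diff : ∀ᵐ x ∂μ, ∀ θ ∈ ball θ₀ r, HasDerivAt (f · x) (f' θ x) θ) :
    (fun h => ∫ x, |f (θ₀ + h) x - f θ₀ x| ∂μ - |h| * ∫ x, |f' θ₀ x| ∂μ) =o[𝓝 0] fun h => h := by
  have h_small : (fun h => ∫ x, |(f (θ₀ + h) x - f θ₀ x) / h| ∂μ - ∫ x, |f' θ₀ x| ∂μ)
      =o[𝓝[≠] 0] fun _ => (1 : ℝ) :=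
    (isLittleO_one_iff ℝ).2 (by
      simpa using (tendsto_integral_abs_slope_of_hasDerivAt hr hf hg h_bound h_diff).sub_const
        (∫ x, |f' θ₀ x| ∂μ))
  have h_scale : ∀ h ≠ 0, ∫ x, |f (θ₀ + h) x - f θ₀ x| ∂μ
      = |h| * ∫ x, |(f (θ₀ + h) x - f θ₀ x) / h| ∂μ := by
    intro h hne
    rw [← integral_const_mul]
    congr with x
    rw [abs_div, mul_div_cancel₀ _ (abs_ne_zero.2 hne)]
  have h_ne : (fun h => ∫ x, |f (θ₀ + h) x - f θ₀ x| ∂μ - |h| * ∫ x, |f' θ₀ x| ∂μ)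
      =o[𝓝[≠] 0] fun h => h := by
    refine ((isBigO_abs_left.2 (isBigO_refl (fun h : ℝ => h) _)).mul_isLittleO h_small).congr' ?_
      (by simp)
    filter_upwards [self_mem_nhdsWithin] with h hne
    rw [h_scale h hne, mul_sub]
  rw [← nhdsNE_sup_pure]
  exact h_ne.sup (isLittleO_pure.2 (by simp))

theorem abs_setIntegral_le_half_integral_abs {f : X → ℝ} (hf : Integrable f μ)
    (hf₀ : ∫ x, f x ∂μ = 0) {s : Set X} (hs : MeasurableSet s) :
    |∫ x in s, f x ∂μ| ≤ (∫ x, |f x| ∂μ) / 2 := by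
  have h_compl : ∫ x in sᶜ, f x ∂μ = -∫ x in s, f x ∂μ := by
    linarith [integral_add_compl hs hf]
  have h_s : |∫ x in s, f x ∂μ| ≤ ∫ x in s, |f x| ∂μ := abs_integral_le_integral_abs
  have h_sc : |∫ x in sᶜ, f x ∂μ| ≤ ∫ x in sᶜ, |f x| ∂μ := abs_integral_le_integral_abs
  rw [h_compl, abs_neg] at h_sc
  linarith [integral_add_compl hs hf.abs]

theorem setIntegral_nonneg_eq_half_integral_abs {f : X → ℝ} (hf : Integrable f μ)
    (hfm : Measurable f) (hf₀ : ∫ x, f x ∂μ = 0) :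
    ∫ x in {x | 0 ≤ f x}, f x ∂μ = (∫ x, |f x| ∂μ) / 2 := by
  have hS : MeasurableSet {x | 0 ≤ f x} := measurableSet_le measurable_const hfm
  have h_pos : ∫ x in {x | 0 ≤ f x}, |f x| ∂μ = ∫ x in {x | 0 ≤ f x}, f x ∂μ :=
    setIntegral_congr_fun hS fun x hx => abs_of_nonneg hx
  have h_neg : ∫ x in {x | 0 ≤ f x}ᶜ, |f x| ∂μ = -∫ x in {x | 0 ≤ f x}ᶜ, f x ∂μ := by
    rw [← integral_neg]
    exact setIntegral_congr_fun hS.compl fun x hx => abs_of_neg (not_le.1 hx)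
  linarith [integral_add_compl hS hf, integral_add_compl hS hf.abs]

theorem toReal_withDensity_ofReal_apply {p : X → ℝ} (hp : AEStronglyMeasurable p μ) (hp₀ : 0 ≤ p)
    {s : Set X} (hs : MeasurableSet s) :
    ((μ.withDensity fun x => ENNReal.ofReal (p x)) s).toReal = ∫ x in s, p x ∂μ := by
  rw [withDensity_apply _ hs, integral_eq_lintegral_of_nonneg_ae (ae_of_all _ hp₀) hp.restrict]

theorem two_mul_tvDist_withDensity {p q : X → ℝ} (hpm : Measurable p) (hqm : Measurable q)
    (hp : Integrable p μ) (hq : Integrable q μ) (hp₀ : 0 ≤ p) (hq₀ : 0 ≤ q)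
    (hpq : ∫ x, p x ∂μ = ∫ x, q x ∂μ) :
    2 * tvDist (μ.withDensity fun x => ENNReal.ofReal (p x))
        (μ.withDensity fun x => ENNReal.ofReal (q x)) = ∫ x, |p x - q x| ∂μ := by
  set P := μ.withDensity fun x => ENNReal.ofReal (p x)
  set Q := μ.withDensity fun x => ENNReal.ofReal (q x)
  have h_int : Integrable (p - q) μ := hp.sub hq
  have h_zero : ∫ x, (p - q) x ∂μ = 0 := by simp [integral_sub hp hq, hpq]
  have h_apply (s : {s : Set X // MeasurableSet s}) :
      |(P s.1).toReal - (Q s.1).toReal| = |∫ x in s.1, (p - q) x ∂μ| := by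
    rw [toReal_withDensity_ofReal_apply hp.1 hp₀ s.2, toReal_withDensity_ofReal_apply hq.1 hq₀ s.2,
      Pi.sub_def, integral_sub hp.integrableOn hq.integrableOn]
  have h_greatest : IsGreatest (range fun s : {s : Set X // MeasurableSet s} =>
      |(P s.1).toReal - (Q s.1).toReal|) ((∫ x, |(p - q) x| ∂μ) / 2) := by
    refine ⟨⟨⟨{x | 0 ≤ (p - q) x}, measurableSet_le measurable_const (hpm.sub hqm)⟩, ?_⟩, ?_⟩
    · refine (h_apply _).trans ?_
      rw [setIntegral_nonneg_eq_half_integral_abs h_int (hpm.sub hqm) h_zero,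
        abs_of_nonneg (by positivity)]
    · rintro _ ⟨s, rfl⟩
      exact (h_apply s).trans_le (abs_setIntegral_le_half_integral_abs h_int h_zero s.2)
  have h_tv : tvDist P Q = (∫ x, |(p - q) x| ∂μ) / 2 := h_greatest.csSup_eq
  rw [h_tv]
  simp only [Pi.sub_apply]
  ring

end

section

variable {X : Type*} [MeasurableSpace X] {μ : Measure X} {T : X → ℝ} {θ : ℝ}

theorem logPart_eq_cgf : logPart μ T = cgf T μ := rfl

noncomputable def expFamDensity (μ : Measure X) (T : X → ℝ) (θ : ℝ) (x : X) : ℝ :=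
  exp (θ * T x - logPart μ T θ)

theorem expFam_eq_withDensity :
    expFam μ T θ = μ.withDensity fun x => ENNReal.ofReal (expFamDensity μ T θ x) := rfl

theorem measurable_expFamDensity (hT : Measurable T) : Measurable (expFamDensity μ T θ) :=
  ((hT.const_mul θ).sub_const _).exp

theorem expFamDensity_pos (x : X) : 0 < expFamDensity μ T θ x := exp_pos _

theorem expFamDensity_eq_div (hμ : μ ≠ 0) (hθ : Integrable (fun x => exp (θ * T x)) μ) (x : X) :
    expFamDensity μ T θ x = exp (θ * T x) / mgf T μ θ := by
  rw [expFamDensity, exp_sub, logPart_eq_cgf, cgf, exp_log (mgf_pos' hμ hθ)]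

theorem integrable_expFamDensity (hμ : μ ≠ 0) (hθ : Integrable (fun x => exp (θ * T x)) μ) :
    Integrable (expFamDensity μ T θ) μ := by
  simpa only [funext (expFamDensity_eq_div hμ hθ)] using hθ.div_const (mgf T μ θ)

theorem integral_expFamDensity (hμ : μ ≠ 0) (hθ : Integrable (fun x => exp (θ * T x)) μ) :
    ∫ x, expFamDensity μ T θ x ∂μ = 1 := by
  simp_rw [expFamDensity_eq_div hμ hθ, integral_div]
  exact div_self (mgf_pos' hμ hθ).ne'

theorem expFam_eq_tilted (hμ : μ ≠ 0) (hθ : Integrable (fun x => exp (θ * T x)) μ) :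
    expFam μ T θ = μ.tilted (θ * T ·) := by
  simp_rw [expFam_eq_withDensity, expFamDensity_eq_div hμ hθ]
  rfl

theorem integral_expFam (hμ : μ ≠ 0) (hθ : Integrable (fun x => exp (θ * T x)) μ)
    (g : X → ℝ) : ∫ x, g x ∂(expFam μ T θ) = ∫ x, expFamDensity μ T θ x * g x ∂μ := by
  rw [expFam_eq_tilted hμ hθ, integral_tilted_mul_eq_cgf g hθ]
  rfl

theorem integral_expFam_self (hμ : μ ≠ 0) (hθ : θ ∈ interior (integrableExpSet T μ)) :
    ∫ x, T x ∂(expFam μ T θ) = deriv (logPart μ T) θ := by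
  rw [expFam_eq_tilted hμ (interior_subset (s := integrableExpSet T μ) hθ)]
  exact integral_tilted_mul_self hθ

theorem hasDerivAt_expFamDensity (hθ : θ ∈ interior (integrableExpSet T μ)) (x : X) :
    HasDerivAt (expFamDensity μ T · x)
      (expFamDensity μ T θ x * (T x - deriv (logPart μ T) θ)) θ := by
  have hL : HasDerivAt (logPart μ T) (deriv (logPart μ T) θ) θ :=
    (analyticAt_cgf hθ).differentiableAt.hasDerivAt
  exact ((hasDerivAt_mul_const (T x)).sub hL).exp

theorem exists_integrable_bound_deriv_expFamDensity {θ₀ : ℝ}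
    (hθ₀ : θ₀ ∈ interior (integrableExpSet T μ)) :
    ∃ g : X → ℝ, Integrable g μ ∧ ∀ᶠ θ in 𝓝 θ₀, ∀ x,
      |expFamDensity μ T θ x * (T x - deriv (logPart μ T) θ)| ≤ g x := by
  obtain ⟨ρ, hρ, h_ball⟩ := Metric.mem_nhds_iff.1 (mem_interior_iff_mem_nhds.1 hθ₀)
  set δ := ρ / 3 with hδ
  have h_int (c : ℝ) (hc : |c| < ρ) : Integrable (fun x => exp ((θ₀ + c) * T x)) μ :=
    h_ball (by simpa [Real.dist_eq] using hc)
  set K := |logPart μ T θ₀| + 1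
  set K' := |deriv (logPart μ T) θ₀| + 1
  have h_analytic := analyticAt_cgf hθ₀
  have hL : ∀ᶠ θ in 𝓝 θ₀, |logPart μ T θ| < K :=
    h_analytic.continuousAt.abs.eventually (gt_mem_nhds (lt_add_one _))
  have hL' : ∀ᶠ θ in 𝓝 θ₀, |deriv (logPart μ T) θ| < K' :=
    h_analytic.deriv.continuousAt.abs.eventually (gt_mem_nhds (lt_add_one _))
  have h_exp (n : ℕ) : Integrable (fun x => |T x| ^ n * exp (θ₀ * T x + δ * |T x|)) μ :=
    integrable_pow_abs_mul_exp_add_of_integrable_exp_mul (t := 2 * δ)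
      (h_int _ (by rw [abs_of_pos (by positivity)]; linarith [hδ]))
      (h_int _ (by rw [abs_neg, abs_of_pos (by positivity)]; linarith [hδ]))
      (by positivity) (by rw [abs_of_pos (by positivity)]; linarith [hδ]) n
  refine ⟨fun x => exp K * ((|T x| + K') * exp (θ₀ * T x + δ * |T x|)), ?_, ?_⟩
  · refine ((h_exp 1).add ((h_exp 0).const_mul K')).const_mul (exp K) |>.congr ?_
    exact ae_of_all _ fun x => by simp only [Pi.add_apply, pow_one, pow_zero]; ring
  filter_upwards [hL, hL', ball_mem_nhds θ₀ (by positivity : 0 < δ)] with θ hθL hθL' hθ x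
  have h_lin : (θ - θ₀) * T x ≤ δ * |T x| := by
    rw [mem_ball, Real.dist_eq] at hθ
    calc (θ - θ₀) * T x ≤ |θ - θ₀| * |T x| := by rw [← abs_mul]; exact le_abs_self _
      _ ≤ δ * |T x| := by gcongr
  have h_density : expFamDensity μ T θ x ≤ exp K * exp (θ₀ * T x + δ * |T x|) := by
    rw [expFamDensity, ← exp_add, exp_le_exp]
    linarith [neg_abs_le (logPart μ T θ)]
  have h_score : |T x - deriv (logPart μ T) θ| ≤ |T x| + K' :=
    (abs_sub _ _).trans (by linarith)
  rw [abs_mul, abs_of_pos (expFamDensity_pos x)]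
  calc expFamDensity μ T θ x * |T x - deriv (logPart μ T) θ|
      ≤ exp K * exp (θ₀ * T x + δ * |T x|) * (|T x| + K') := by gcongr
    _ = _ := by ring

theorem two_mul_tvDist_expFam (hμ : μ ≠ 0) (hT : Measurable T) {θ' : ℝ}
    (hθ : Integrable (fun x => exp (θ * T x)) μ) (hθ' : Integrable (fun x => exp (θ' * T x)) μ) :
    2 * tvDist (expFam μ T θ) (expFam μ T θ')
      = ∫ x, |expFamDensity μ T θ x - expFamDensity μ T θ' x| ∂μ :=
  two_mul_tvDist_withDensity (measurable_expFamDensity hT) (measurable_expFamDensity hT)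
    (integrable_expFamDensity hμ hθ) (integrable_expFamDensity hμ hθ')
    (fun x => (expFamDensity_pos x).le) (fun x => (expFamDensity_pos x).le)
    ((integral_expFamDensity hμ hθ).trans (integral_expFamDensity hμ hθ').symm)

end

/-- For a one-parameter exponential family, the `L¹`-information
`J_θ = E_θ[|T(X) - A'(θ)|]` (with `A'(θ₀) = E_{θ₀}[T(X)]`) satisfies
`2 ‖P_{θ₀+h} - P_{θ₀}‖_TV = |h| J_{θ₀} + o(|h|)` as `h → 0`. -/
theorem statement12 {X : Type*} [MeasurableSpace X]
    (μ : Measure X) (hμ : μ ≠ 0) (T : X → ℝ) (hT : Measurable T) (θ0 : ℝ)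
    (hnbhd : ∃ ε > 0, ∀ θ : ℝ, |θ - θ0| < ε →
      Integrable (fun x => Real.exp (θ * T x)) μ) :
    (fun h : ℝ =>
        2 * tvDist (expFam μ T (θ0 + h)) (expFam μ T θ0) -
          |h| * ∫ x, |T x - ∫ y, T y ∂(expFam μ T θ0)| ∂(expFam μ T θ0))
      =o[nhds 0] fun h : ℝ => h := by
  obtain ⟨ε, hε, hInt⟩ := hnbhd
  have h_ball : ball θ0 ε ⊆ integrableExpSet T μ := fun θ hθ =>
    hInt θ (by rwa [mem_ball, Real.dist_eq] at hθ)
  have hθ0 : θ0 ∈ interior (integrableExpSet T μ) :=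
    mem_interior_iff_mem_nhds.2 (mem_of_superset (ball_mem_nhds θ0 hε) h_ball)
  obtain ⟨g, hg, h_bound⟩ := exists_integrable_bound_deriv_expFamDensity hθ0
  obtain ⟨r, hr, h_near⟩ :=
    Metric.eventually_nhds_iff_ball.1 (h_bound.and (isOpen_interior.eventually_mem hθ0))
  have h_L1 := isLittleO_integral_abs_sub_sub_abs_mul_integral_abs_deriv hr
    (Eventually.of_forall fun θ => (measurable_expFamDensity hT).aestronglyMeasurable) hg
    (ae_of_all _ fun x θ hθ => (h_near θ hθ).1 x)
    (ae_of_all _ fun x θ hθ => hasDerivAt_expFamDensity (h_near θ hθ).2 x)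
  have h_tv : ∀ᶠ h in 𝓝 (0 : ℝ), ∫ x, |expFamDensity μ T (θ0 + h) x - expFamDensity μ T θ0 x| ∂μ
      = 2 * tvDist (expFam μ T (θ0 + h)) (expFam μ T θ0) := by
    filter_upwards [ball_mem_nhds (0 : ℝ) hε] with h hh
    refine (two_mul_tvDist_expFam hμ hT (h_ball ?_) (h_ball (mem_ball_self hε))).symm
    simpa [Real.dist_eq] using hh
  have h_J : ∫ x, |expFamDensity μ T θ0 x * (T x - deriv (logPart μ T) θ0)| ∂μ
      = ∫ x, |T x - ∫ y, T y ∂(expFam μ T θ0)| ∂(expFam μ T θ0) := by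
    rw [integral_expFam_self hμ hθ0, integral_expFam hμ (h_ball (mem_ball_self hε))]
    congr with x
    rw [abs_mul, abs_of_pos (expFamDensity_pos x)]
  refine h_L1.congr' ?_ EventuallyEq.rfl
  filter_upwards [h_tv] with h hh
  rw [hh, h_J]
end
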